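/- arXiv:1212.2124 — 9 statements merged into one kernel-verified Lean document; each statement's English description precedes it below -/
import Mathlib

section
/- Let R be a ring and let a ∈ R be an element such that the chain aR ⊇ a²R ⊇ a³R ⊇ … of right ideals stabilizes and the chain Ra ⊇ Ra² ⊇ Ra³ ⊇ … of left ideals stabilizes. Then there exists an idempotent e ∈ R such that ⋂ₖ aᵏR = eR, ⋃ₖ ann_r(aᵏ) = (1-e)R, ⋂ₖ Raᵏ = Re, and ⋃ₖ ann_ℓ(aᵏ) = R(1-e). In particular R = ⋂ₖ aᵏR ⊕ ⋃ₖ ann_r(aᵏ) as right R-modules. -/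
/-- The chain `aR ⊇ a²R ⊇ …` of right ideals stabilizes. -/
def RightChainStab {R : Type*} [Ring R] (a : R) : Prop :=
  ∃ n : ℕ, ∀ k ≥ n, {x : R | ∃ r, x = a ^ k * r} = {x : R | ∃ r, x = a ^ n * r}

/-- The chain `Ra ⊇ Ra² ⊇ …` of left ideals stabilizes. -/
def LeftChainStab {R : Type*} [Ring R] (a : R) : Prop :=
  ∃ n : ℕ, ∀ k ≥ n, {x : R | ∃ r, x = r * a ^ k} = {x : R | ∃ r, x = r * a ^ n}

/-- An element is π-regular if both chains stabilize. -/
def IsPiRegularElem {R : Type*} [Ring R] (a : R) : Prop :=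
  RightChainStab a ∧ LeftChainStab a

theorem fitting_decomposition {R : Type*} [Ring R] (a : R)
    (h : IsPiRegularElem a) :
    ∃ e : R, IsIdempotentElem e ∧
      (⋂ k : ℕ, {x : R | ∃ r, x = a ^ (k + 1) * r}) = {x : R | ∃ r, x = e * r} ∧
      (⋃ k : ℕ, {x : R | a ^ (k + 1) * x = 0}) = {x : R | ∃ r, x = (1 - e) * r} ∧
      (⋂ k : ℕ, {x : R | ∃ r, x = r * a ^ (k + 1)}) = {x : R | ∃ r, x = r * e} ∧
      (⋃ k : ℕ, {x : R | x * a ^ (k + 1) = 0}) = {x : R | ∃ r, x = r * (1 - e)} ∧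
      (∀ x : R, ∃ y ∈ (⋂ k : ℕ, {x : R | ∃ r, x = a ^ (k + 1) * r}),
        ∃ z ∈ (⋃ k : ℕ, {x : R | a ^ (k + 1) * x = 0}), x = y + z) ∧
      ((⋂ k : ℕ, {x : R | ∃ r, x = a ^ (k + 1) * r}) ∩
        (⋃ k : ℕ, {x : R | a ^ (k + 1) * x = 0}) ⊆ {0}) := by
  obtain ⟨⟨n₁, hn₁⟩, ⟨n₂, hn₂⟩⟩ := h
  obtain ⟨n, hndef⟩ : ∃ n : ℕ, n = max (max n₁ n₂) 1 := ⟨_, rfl⟩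
  have hn1 : 1 ≤ n := hndef ▸ le_max_right _ _
  have hnn₁ : n₁ ≤ n := hndef ▸ (le_max_left n₁ n₂).trans (le_max_left _ 1)
  have hnn₂ : n₂ ≤ n := hndef ▸ (le_max_right n₁ n₂).trans (le_max_left _ 1)
  have hR : ∀ k, n ≤ k → {x : R | ∃ r, x = a ^ k * r} = {x : R | ∃ r, x = a ^ n * r} :=
    fun k hk => (hn₁ k (hnn₁.trans hk)).trans (hn₁ n hnn₁).symm
  have hL : ∀ k, n ≤ k → {x : R | ∃ r, x = r * a ^ k} = {x : R | ∃ r, x = r * a ^ n} :=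
    fun k hk => (hn₂ k (hnn₂.trans hk)).trans (hn₂ n hnn₂).symm
  -- a^n lies in every a^m R and every R a^m
  have han_r : ∀ m : ℕ, ∃ r, a ^ n = a ^ m * r := by
    intro m
    rcases le_or_gt m n with hm | hm
    · exact ⟨a ^ (n - m), by rw [← pow_add, Nat.add_sub_cancel' hm]⟩
    · have : (a : R) ^ n ∈ {x : R | ∃ r, x = a ^ m * r} := by
        rw [hR m hm.le]; exact ⟨1, (mul_one _).symm⟩
      exact this
  have han_l : ∀ m : ℕ, ∃ r, a ^ n = r * a ^ m := by
    intro m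
    rcases le_or_gt m n with hm | hm
    · exact ⟨a ^ (n - m), by rw [← pow_add, Nat.sub_add_cancel hm]⟩
    · have : (a : R) ^ n ∈ {x : R | ∃ r, x = r * a ^ m} := by
        rw [hL m hm.le]; exact ⟨1, (one_mul _).symm⟩
      exact this
  obtain ⟨x, hx1⟩ := han_r (n + 1)
  obtain ⟨y, hy1⟩ := han_l (n + 1)
  -- iterated versions
  have hxk : ∀ k : ℕ, a ^ n = a ^ (n + k) * x ^ k := by
    intro k
    induction k with
    | zero => simp
    | succ k ih =>
      have h2 : a ^ (n + k) = a ^ (n + k + 1) * x := by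
        calc a ^ (n + k) = a ^ k * a ^ n := by rw [← pow_add, add_comm]
          _ = a ^ k * (a ^ (n + 1) * x) := by rw [← hx1]
          _ = (a ^ k * a ^ (n + 1)) * x := by rw [mul_assoc]
          _ = a ^ (n + k + 1) * x := by rw [← pow_add]; ring_nf
      calc a ^ n = a ^ (n + k) * x ^ k := ih
        _ = a ^ (n + k + 1) * x * x ^ k := by rw [h2]
        _ = a ^ (n + (k + 1)) * x ^ (k + 1) := by
            rw [mul_assoc, ← pow_succ']; ring_nf
  have hyk : ∀ k : ℕ, a ^ n = y ^ k * a ^ (n + k) := by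
    intro k
    induction k with
    | zero => simp
    | succ k ih =>
      have h2 : a ^ (n + k) = y * a ^ (n + k + 1) := by
        calc a ^ (n + k) = a ^ n * a ^ k := by rw [← pow_add]
          _ = (y * a ^ (n + 1)) * a ^ k := by rw [← hy1]
          _ = y * (a ^ (n + 1) * a ^ k) := by rw [mul_assoc]
          _ = y * a ^ (n + k + 1) := by rw [← pow_add]; ring_nf
      calc a ^ n = y ^ k * a ^ (n + k) := ih
        _ = y ^ k * (y * a ^ (n + k + 1)) := by rw [h2]
        _ = y ^ (k + 1) * a ^ (n + (k + 1)) := by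
            rw [← mul_assoc, ← pow_succ]; ring_nf
  have hcomm : ∀ k : ℕ, a ^ n * x ^ k = y ^ k * a ^ n := by
    intro k
    induction k with
    | zero => simp
    | succ k ih =>
      have h1 : a ^ n * x = y * a ^ n := by
        calc a ^ n * x = (y * a ^ (n + 1)) * x := by rw [← hy1]
          _ = y * (a ^ (n + 1) * x) := by rw [mul_assoc]
          _ = y * a ^ n := by rw [← hx1]
      calc a ^ n * x ^ (k + 1) = (a ^ n * x ^ k) * x := by rw [pow_succ, mul_assoc]
        _ = y ^ k * (a ^ n * x) := by rw [ih, mul_assoc]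
        _ = y ^ k * (y * a ^ n) := by rw [h1]
        _ = y ^ (k + 1) * a ^ n := by rw [← mul_assoc, ← pow_succ]
  -- opaque abbreviations
  obtain ⟨p, hp⟩ : ∃ p : R, p = a ^ n := ⟨_, rfl⟩
  obtain ⟨u, hu⟩ : ∃ u : R, u = x ^ n := ⟨_, rfl⟩
  obtain ⟨v, hv⟩ : ∃ v : R, v = y ^ n := ⟨_, rfl⟩
  have hpu : p = p * p * u := by rw [hp, hu, ← pow_add]; exact hxk n
  have hpv : p = v * (p * p) := by rw [hp, hv, ← pow_add]; exact hyk n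
  have huv : p * u = v * p := by rw [hp, hu, hv]; exact hcomm n
  have hpr : ∀ m : ℕ, ∃ r, p = a ^ m * r := by intro m; rw [hp]; exact han_r m
  have hpl : ∀ m : ℕ, ∃ r, p = r * a ^ m := by intro m; rw [hp]; exact han_l m
  have h_ep : (p * u) * p = p := by rw [huv, mul_assoc, ← hpv]
  have h_pe : p * (p * u) = p := by rw [← mul_assoc, ← hpu]
  have hidem : (p * u) * (p * u) = p * u := by
    rw [← mul_assoc (p * u) p u, h_ep]
  have hexp1 : n - 1 + 1 = n := Nat.sub_add_cancel hn1
  have hexp2 : n + n - 1 + 1 = n + n := Nat.sub_add_cancel (by omega)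
  -- kernel facts
  have hker_r : ∀ z : R, (∃ k : ℕ, a ^ (k + 1) * z = 0) → p * z = 0 := by
    rintro z ⟨k, hk⟩
    have hMz : a ^ max (k + 1) n * z = 0 := by
      have hM : a ^ max (k + 1) n = a ^ (max (k + 1) n - (k + 1)) * a ^ (k + 1) := by
        rw [← pow_add, Nat.sub_add_cancel (le_max_left _ _)]
      rw [hM, mul_assoc, hk, mul_zero]
    obtain ⟨s, hs⟩ := hpl (max (k + 1) n)
    rw [hs, mul_assoc, hMz, mul_zero]
  have hker_l : ∀ z : R, (∃ k : ℕ, z * a ^ (k + 1) = 0) → z * p = 0 := by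
    rintro z ⟨k, hk⟩
    have hMz : z * a ^ max (k + 1) n = 0 := by
      have hM : a ^ max (k + 1) n = a ^ (k + 1) * a ^ (max (k + 1) n - (k + 1)) := by
        rw [← pow_add, Nat.add_sub_cancel' (le_max_left _ _)]
      rw [hM, ← mul_assoc, hk, zero_mul]
    obtain ⟨s, hs⟩ := hpr (max (k + 1) n)
    rw [hs, ← mul_assoc, hMz, zero_mul]
  -- Claim 1 : ⋂ aᵏ⁺¹R = eR
  have c1 : (⋂ k : ℕ, {w : R | ∃ r, w = a ^ (k + 1) * r}) = {w : R | ∃ r, w = (p * u) * r} := by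
    ext z
    simp only [Set.mem_iInter, Set.mem_setOf_eq]
    constructor
    · intro hz
      obtain ⟨r, hr⟩ := hz (n + n - 1)
      rw [hexp2, pow_add, ← hp] at hr
      refine ⟨z, ?_⟩
      calc z = p * p * r := hr
        _ = ((p * u) * p) * (p * r) := by rw [h_ep, ← mul_assoc]
        _ = (p * u) * (p * (p * r)) := by rw [mul_assoc]
        _ = (p * u) * (p * p * r) := by rw [← mul_assoc p p r]
        _ = (p * u) * z := by rw [← hr]
    · rintro ⟨r, hr⟩ k
      obtain ⟨t, ht⟩ := hpr (k + 1)
      exact ⟨t * (u * r), by rw [hr, ht]; simp only [mul_assoc]⟩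
  -- Claim 2 : ⋃ ann_r = (1-e)R
  have c2 : (⋃ k : ℕ, {w : R | a ^ (k + 1) * w = 0}) = {w : R | ∃ r, w = (1 - p * u) * r} := by
    ext z
    simp only [Set.mem_iUnion, Set.mem_setOf_eq]
    constructor
    · intro hz
      have hpz : p * z = 0 := hker_r z hz
      have hez : (p * u) * z = 0 := by rw [huv, mul_assoc, hpz, mul_zero]
      exact ⟨z, by rw [sub_mul, one_mul, hez, sub_zero]⟩
    · rintro ⟨r, hr⟩
      refine ⟨n - 1, ?_⟩
      rw [hexp1, ← hp, hr, ← mul_assoc, mul_sub, mul_one, h_pe, sub_self, zero_mul]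
  -- Claim 3 : ⋂ Raᵏ⁺¹ = Re
  have c3 : (⋂ k : ℕ, {w : R | ∃ r, w = r * a ^ (k + 1)}) = {w : R | ∃ r, w = r * (p * u)} := by
    ext z
    simp only [Set.mem_iInter, Set.mem_setOf_eq]
    constructor
    · intro hz
      obtain ⟨r, hr⟩ := hz (n + n - 1)
      rw [hexp2, pow_add, ← hp, ← mul_assoc] at hr
      refine ⟨z, ?_⟩
      calc z = r * p * p := hr
        _ = r * p * (p * (p * u)) := by rw [h_pe]
        _ = (r * p * p) * (p * u) := by simp only [mul_assoc]
        _ = z * (p * u) := by rw [← hr]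
    · rintro ⟨r, hr⟩ k
      obtain ⟨t, ht⟩ := hpl (k + 1)
      refine ⟨r * (v * t), ?_⟩
      rw [hr, huv, ht]; simp only [mul_assoc]
  -- Claim 4 : ⋃ ann_ℓ = R(1-e)
  have c4 : (⋃ k : ℕ, {w : R | w * a ^ (k + 1) = 0}) = {w : R | ∃ r, w = r * (1 - p * u)} := by
    ext z
    simp only [Set.mem_iUnion, Set.mem_setOf_eq]
    constructor
    · intro hz
      have hpz : z * p = 0 := hker_l z hz
      have hez : z * (p * u) = 0 := by rw [← mul_assoc, hpz, zero_mul]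
      exact ⟨z, by rw [mul_sub, mul_one, hez, sub_zero]⟩
    · rintro ⟨r, hr⟩
      refine ⟨n - 1, ?_⟩
      rw [hexp1, ← hp, hr, mul_assoc, sub_mul, one_mul, h_ep, sub_self, mul_zero]
  refine ⟨p * u, hidem, c1, c2, c3, c4, ?_, ?_⟩
  · -- decomposition
    intro w
    refine ⟨(p * u) * w, ?_, (1 - p * u) * w, ?_, by noncomm_ring⟩
    · rw [c1]; exact ⟨w, rfl⟩
    · rw [c2]; exact ⟨w, rfl⟩
  · -- trivial intersection
    rintro w ⟨hw1, hw2⟩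
    rw [c1] at hw1
    rw [c2] at hw2
    obtain ⟨r, hr⟩ := hw1
    obtain ⟨s, hs⟩ := hw2
    have h0 : (p * u) * w = 0 := by
      rw [hs, ← mul_assoc, mul_sub, mul_one, hidem, sub_self, zero_mul]
    have hw : w = (p * u) * w := by
      rw [hr, ← mul_assoc, hidem]
    simp only [Set.mem_singleton_iff]
    rw [hw, h0]
end

section
/- Let R be a ring and a ∈ R. Then a is π-regular (i.e. both chains aⁿR and Raⁿ stabilize) if and only if there exists an idempotent e ∈ R such that, with f := 1 - e: (A) a = eae + faf, (B) eae is invertible in the ring eRe (with unity e), and (C) faf is nilpotent. Moreover such an idempotent e is uniquely determined by a. -/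
/-- `e` is an associated idempotent of `a`: (A) `a = eae + faf` with `f = 1 - e`,
(B) `eae` is invertible in the corner ring `eRe` (with unity `e`), and
(C) `faf` is nilpotent. -/
def IsAssociatedIdempotent {R : Type*} [Ring R] (a e : R) : Prop :=
  IsIdempotentElem e ∧
  a = e * a * e + (1 - e) * a * (1 - e) ∧
  (∃ b : R, b = e * b * e ∧ (e * a * e) * b = e ∧ b * (e * a * e) = e) ∧
  IsNilpotent ((1 - e) * a * (1 - e))

section Monoid

variable {M : Type*} [Monoid M] {a b b' x y : M} {k m : ℕ}

theorem pow_eq_pow_succ_mul_of_le (h : a ^ k = a ^ (k + 1) * y) (hkm : k ≤ m) :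
    a ^ m = a ^ (m + 1) * y := by
  obtain ⟨d, rfl⟩ := Nat.exists_eq_add_of_le' hkm
  calc a ^ (d + k) = a ^ d * (a ^ (k + 1) * y) := by rw [pow_add, ← h]
    _ = a ^ (d + k + 1) * y := by rw [← mul_assoc, ← pow_add, add_assoc]

theorem pow_eq_pow_add_mul_pow (h : a ^ k = a ^ (k + 1) * y) (j : ℕ) :
    a ^ k = a ^ (k + j) * y ^ j := by
  induction j with
  | zero => simp
  | succ j ih =>
    rw [ih, pow_eq_pow_succ_mul_of_le h (Nat.le_add_right k j), pow_succ' y, mul_assoc,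
      add_assoc]

theorem pow_eq_mul_pow_add (h : a ^ k = x * a ^ (k + 1)) (j : ℕ) :
    a ^ k = x ^ j * a ^ (k + j) := by
  have := pow_eq_pow_add_mul_pow (a := MulOpposite.op a) (y := MulOpposite.op x)
    (by simpa using congrArg MulOpposite.op h) j
  simpa using congrArg MulOpposite.unop this

theorem pow_eq_mul_pow_succ_of_le (h : a ^ k = x * a ^ (k + 1)) (hkm : k ≤ m) :
    a ^ m = x * a ^ (m + 1) := by
  have := pow_eq_pow_succ_mul_of_le (a := MulOpposite.op a) (y := MulOpposite.op x)
    (by simpa using congrArg MulOpposite.op h) hkm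
  simpa using congrArg MulOpposite.unop this

structure IsDrazinInverse (a b : M) : Prop where
  commute : Commute a b
  mul_mul_self : b * a * b = b
  exists_pow_eq : ∃ k, a ^ k = a ^ (k + 1) * b

namespace IsDrazinInverse

theorem isIdempotentElem_mul (hb : IsDrazinInverse a b) : IsIdempotentElem (a * b) := by
  rw [IsIdempotentElem, mul_assoc, ← mul_assoc b, hb.mul_mul_self]

theorem mul_eq_pow_mul_pow (hb : IsDrazinInverse a b) (hk : a ^ k = a ^ (k + 1) * b) :
    a * b = a ^ k * b ^ k := by
  calc a * b = (a * b) ^ (k + 1) := (hb.isIdempotentElem_mul.pow_succ_eq k).symm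
    _ = a ^ (k + 1) * b * b ^ k := by rw [hb.commute.mul_pow, pow_succ' b, mul_assoc]
    _ = a ^ k * b ^ k := by rw [← hk]

theorem mul_eq_mul_mul_mul (hb : IsDrazinInverse a b) (hk : a ^ k = a ^ (k + 1) * b)
    (hb' : Commute a b') (hk' : a ^ k = a ^ (k + 1) * b') :
    a * b = a * b' * (a * b) ∧ a * b = a * b * (a * b') := by
  have hright : a ^ k * (a * b') = a ^ k := by rw [← mul_assoc, ← pow_succ, ← hk']
  have hleft : a * b' * a ^ k = a ^ k := by
    rw [← (((Commute.refl a).mul_right hb').pow_left k).eq, hright]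
  have hcomm : a ^ k * b ^ k = b ^ k * a ^ k := (hb.commute.pow_pow k k).eq
  rw [hb.mul_eq_pow_mul_pow hk]
  constructor
  · rw [← mul_assoc, hleft]
  · rw [hcomm, mul_assoc, hright]

theorem unique (hb : IsDrazinInverse a b) (hb' : IsDrazinInverse a b') : b = b' := by
  obtain ⟨k, hk⟩ := hb.exists_pow_eq
  obtain ⟨k', hk'⟩ := hb'.exists_pow_eq
  have hm := pow_eq_pow_succ_mul_of_le hk (le_max_left k k')
  have hm' := pow_eq_pow_succ_mul_of_le hk' (le_max_right k k')
  have hab : a * b = a * b' :=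
    ((hb.mul_eq_mul_mul_mul hm hb'.commute hm').1).trans
      ((hb'.mul_eq_mul_mul_mul hm' hb.commute hm).2).symm
  calc b = b * (a * b) := by rw [← mul_assoc, hb.mul_mul_self]
    _ = a * b' * b' := by rw [hab, ← mul_assoc, ← hb.commute.eq, hab]
    _ = b' := by rw [hb'.commute.eq, hb'.mul_mul_self]

end IsDrazinInverse

theorem exists_isDrazinInverse_of_pow_eq (hy : a ^ k = a ^ (k + 1) * y)
    (hx : a ^ m = x * a ^ (m + 1)) : ∃ b, IsDrazinInverse a b := by
  set n := max k m
  have hy' : a ^ n = a ^ (n + 1) * y := pow_eq_pow_succ_mul_of_le hy (le_max_left k m)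
  have hx' : a ^ n = x * a ^ (n + 1) := pow_eq_mul_pow_succ_of_le hx (le_max_right k m)
  have hxy₁ : x * a ^ n = a ^ n * y := by
    conv_lhs => rw [hy']
    rw [← mul_assoc, ← hx']
  have hxy : ∀ j, x ^ j * a ^ n = a ^ n * y ^ j := by
    intro j
    induction j with
    | zero => simp
    | succ j ih => rw [pow_succ, mul_assoc, hxy₁, ← mul_assoc, ih, mul_assoc, ← pow_succ]
  have hab : a * (a ^ n * y ^ (n + 1)) = a ^ n * y ^ n := by
    rw [pow_succ' y, ← mul_assoc, ← mul_assoc, ← pow_succ', ← hy']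
  have hba : a ^ n * y ^ (n + 1) * a = a ^ n * y ^ n := by
    rw [← hxy, pow_succ, mul_assoc, mul_assoc, ← pow_succ, ← hx', hxy]
  refine ⟨a ^ n * y ^ (n + 1), hab.trans hba.symm, ?_, n, ?_⟩
  · calc a ^ n * y ^ (n + 1) * a * (a ^ n * y ^ (n + 1))
        = x ^ n * (a ^ (n + n) * y ^ n) * y := by
          rw [hba, ← hxy, pow_add a n n, pow_succ y n]; simp only [mul_assoc]
      _ = a ^ n * y ^ (n + 1) := by
          rw [← pow_eq_pow_add_mul_pow hy' n, hxy, mul_assoc, ← pow_succ]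
  · rw [← mul_assoc, ← pow_add, add_comm (n + 1) n]
    exact pow_eq_pow_add_mul_pow hy' (n + 1)

end Monoid

section Ring

variable {R : Type*} [Ring R] {a b e : R}

theorem IsIdempotentElem.mul_mul_self_of_commute (he : IsIdempotentElem e) (h : Commute e a) :
    e * a * e = a * e := by
  rw [h.eq, mul_assoc, he.eq]

theorem IsIdempotentElem.commute_iff_eq_add (he : IsIdempotentElem e) :
    Commute e a ↔ a = e * a * e + (1 - e) * a * (1 - e) := by
  constructor
  · intro h
    rw [he.mul_mul_self_of_commute h,
      he.one_sub.mul_mul_self_of_commute ((Commute.one_left a).sub_left h), ← mul_add,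
      add_sub_cancel, mul_one]
  · intro h
    have hleft : e * a = e * a * e := by
      conv_lhs => rw [h]
      simp only [mul_add, ← mul_assoc, he.eq, he.mul_one_sub_self, zero_mul, add_zero]
    have hright : a * e = e * a * e := by
      conv_lhs => rw [h]
      simp only [add_mul, mul_assoc, he.eq, he.one_sub_mul_self, mul_zero, add_zero]
    exact hleft.trans hright.symm

theorem IsDrazinInverse.isAssociatedIdempotent (hb : IsDrazinInverse a b) :
    IsAssociatedIdempotent a (a * b) := by
  have he := hb.isIdempotentElem_mul
  have hea : Commute (a * b) a := (Commute.refl a).mul_left hb.commute.symm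
  have heb : a * b * b = b := by rw [hb.commute.eq, hb.mul_mul_self]
  have hbe : b * (a * b) = b := by rw [← mul_assoc, hb.mul_mul_self]
  obtain ⟨k, hk⟩ := hb.exists_pow_eq
  refine ⟨he, he.commute_iff_eq_add.mp hea, ⟨b, ?_, ?_, ?_⟩, k + 1, ?_⟩
  · rw [heb, hbe]
  · rw [he.mul_mul_self_of_commute hea, mul_assoc, heb]
  · rw [he.mul_mul_self_of_commute hea, ← mul_assoc, ← hb.commute.eq, he.eq]
  · have hfa : Commute (1 - a * b) a := (Commute.one_left a).sub_left hea
    rw [he.one_sub.mul_mul_self_of_commute hfa, hfa.symm.mul_pow, he.one_sub.pow_succ_eq,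
      mul_sub, mul_one, ← mul_assoc, ← pow_succ,
      ← pow_eq_pow_succ_mul_of_le hk (Nat.le_succ k), sub_self]

theorem IsAssociatedIdempotent.exists_isDrazinInverse (h : IsAssociatedIdempotent a e) :
    ∃ b, IsDrazinInverse a b ∧ a * b = e := by
  obtain ⟨he, hdecomp, ⟨b, hb, hab, hba⟩, n, hn⟩ := h
  have hea : Commute e a := he.commute_iff_eq_add.mpr hdecomp
  have heb : e * b = b := by rw [hb, ← mul_assoc, ← mul_assoc, he.eq]
  have hbe : b * e = b := by rw [hb, mul_assoc, he.eq]
  rw [he.mul_mul_self_of_commute hea] at hab hba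
  have hab' : a * b = e := by rw [← heb, ← mul_assoc, hab]
  have hba' : b * a = e := by rw [← hbe, mul_assoc, hea.eq, hba]
  refine ⟨b, ⟨hab'.trans hba'.symm, by rw [hba', heb], n + 1, ?_⟩, hab'⟩
  have hfa : Commute (1 - e) a := (Commute.one_left a).sub_left hea
  have hnil : a ^ (n + 1) * (1 - e) = 0 := by
    rw [← he.one_sub.pow_succ_eq n, ← hfa.symm.mul_pow,
      ← he.one_sub.mul_mul_self_of_commute hfa, pow_succ, hn, zero_mul]
  rwa [mul_sub, mul_one, sub_eq_zero, ← hab', ← mul_assoc, ← pow_succ] at hnil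

theorem rightChainStab_iff : RightChainStab a ↔ ∃ k y, a ^ k = a ^ (k + 1) * y := by
  constructor
  · rintro ⟨n, hn⟩
    have hmem : a ^ n ∈ {x : R | ∃ r, x = a ^ (n + 1) * r} := by
      rw [hn (n + 1) n.le_succ]
      exact ⟨1, (mul_one _).symm⟩
    exact ⟨n, hmem⟩
  · rintro ⟨k, y, hy⟩
    refine ⟨k, fun m hm => ?_⟩
    obtain ⟨d, rfl⟩ := Nat.exists_eq_add_of_le hm
    ext z
    constructor
    · rintro ⟨r, rfl⟩
      exact ⟨a ^ d * r, by rw [pow_add, mul_assoc]⟩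
    · rintro ⟨r, rfl⟩
      exact ⟨y ^ d * r, by rw [← mul_assoc, ← pow_eq_pow_add_mul_pow hy]⟩

theorem leftChainStab_iff : LeftChainStab a ↔ ∃ k x, a ^ k = x * a ^ (k + 1) := by
  constructor
  · rintro ⟨n, hn⟩
    have hmem : a ^ n ∈ {x : R | ∃ r, x = r * a ^ (n + 1)} := by
      rw [hn (n + 1) n.le_succ]
      exact ⟨1, (one_mul _).symm⟩
    exact ⟨n, hmem⟩
  · rintro ⟨k, x, hx⟩
    refine ⟨k, fun m hm => ?_⟩
    obtain ⟨d, rfl⟩ := Nat.exists_eq_add_of_le' hm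
    ext z
    constructor
    · rintro ⟨r, rfl⟩
      exact ⟨r * a ^ d, by rw [pow_add, mul_assoc]⟩
    · rintro ⟨r, rfl⟩
      exact ⟨r * x ^ d, by rw [mul_assoc, add_comm, ← pow_eq_mul_pow_add hx]⟩

theorem isPiRegularElem_iff_exists_isDrazinInverse :
    IsPiRegularElem a ↔ ∃ b, IsDrazinInverse a b := by
  rw [IsPiRegularElem, rightChainStab_iff, leftChainStab_iff]
  constructor
  · rintro ⟨⟨k, y, hy⟩, m, x, hx⟩
    exact exists_isDrazinInverse_of_pow_eq hy hx
  · rintro ⟨b, hb⟩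
    obtain ⟨k, hk⟩ := hb.exists_pow_eq
    exact ⟨⟨k, b, hk⟩, k, b, hk.trans (hb.commute.pow_left (k + 1)).eq⟩

end Ring

theorem piRegular_iff_exists_unique_associated_idempotent
    {R : Type*} [Ring R] (a : R) :
    IsPiRegularElem a ↔ ∃! e : R, IsAssociatedIdempotent a e := by
  rw [isPiRegularElem_iff_exists_isDrazinInverse]
  constructor
  · rintro ⟨b, hb⟩
    refine ⟨a * b, hb.isAssociatedIdempotent, fun e he => ?_⟩
    obtain ⟨b', hb', rfl⟩ := he.exists_isDrazinInverse
    rw [hb'.unique hb]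
  · rintro ⟨e, he, -⟩
    obtain ⟨b, hb, -⟩ := he.exists_isDrazinInverse
    exact ⟨b, hb⟩
end

section
/- Let R be a ring, S ⊇ R a ring, X ⊆ S a subset, and R₀ = Cent_R(X) = {r ∈ R : rx = xr for all x ∈ X}. Then there exists a ring S' ⊇ R and a set Σ of ring endomorphisms of S' such that R₀ = {r ∈ R : σ(r) = r for all σ ∈ Σ}. (Every semi-centralizer subring is a semi-invariant subring.) -/
/-!
Work in the dual numbers `S[ε] = S ⊕ Sε` with `ε² = 0`. For `x ∈ S` the element `1 + xε` is a
unit with inverse `1 - xε`, and conjugation by it sends `r ∈ S` to `r + (xr - rx)ε`. So `r` is fixed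
by the inner automorphisms coming from all `x ∈ X` exactly when it commutes with all of `X`.
-/

open TrivSqZeroExt

theorem ConjAct.toRingHom_toConjAct_apply_eq_self_iff {M : Type*} [Ring M] (u : Mˣ) (a : M) :
    MulSemiringAction.toRingHom (ConjAct Mˣ) M (ConjAct.toConjAct u) a = a ↔
      Commute (u : M) a := by
  rw [MulSemiringAction.toRingHom_apply, ConjAct.units_smul_def, ConjAct.ofConjAct_toConjAct,
    Units.mul_inv_eq_iff_eq_mul, commute_iff_eq]

namespace TrivSqZeroExt

variable {R M : Type*} [Ring R] [AddCommGroup M] [Module R M] [Module Rᵐᵒᵖ M]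
  [SMulCommClass R Rᵐᵒᵖ M]

def oneAddInrUnit (m : M) : (TrivSqZeroExt R M)ˣ where
  val := 1 + inr m
  inv := 1 - inr m
  val_inv := by simp [add_mul, mul_sub, inr_mul_inr]
  inv_val := by simp [sub_mul, mul_add, inr_mul_inr]

theorem commute_oneAddInrUnit_inl_iff (r : R) (m : M) :
    Commute ((oneAddInrUnit m : (TrivSqZeroExt R M)ˣ) : TrivSqZeroExt R M) (inl r) ↔
      MulOpposite.op r • m = r • m := by
  rw [oneAddInrUnit, Units.val_mk, commute_iff_eq, add_mul, mul_add, one_mul, mul_one,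
    add_right_inj, inl_mul_inr, inr_mul_inl, inr_injective.eq_iff]

end TrivSqZeroExt

/-- Every semi-centralizer subring is a semi-invariant subring: if `R₀ = Cent_R(X)`
for a subset `X` of an overring `S ⊇ R`, then there is an overring `S'` of `R`
and a set `E` of ring endomorphisms of `S'` such that `R₀ = R^E`. -/
theorem semiCentralizer_is_semiInvariant
    {S : Type u} [Ring S] (R : Subring S) (X : Set S) :
    ∃ (S' : RingCat.{u}) (f : R →+* S') (E : Set (S' →+* S')),
      Function.Injective f ∧
      ∀ r : R, ((∀ x ∈ X, (r : S) * x = x * (r : S)) ↔ ∀ σ ∈ E, σ (f r) = f r) := by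
  let conj (x : S) : TrivSqZeroExt S S →+* TrivSqZeroExt S S :=
    MulSemiringAction.toRingHom _ _ (ConjAct.toConjAct (oneAddInrUnit (R := S) x))
  refine ⟨RingCat.of (TrivSqZeroExt S S), (inlHom S S).comp R.subtype, conj '' X,
    inl_injective.comp Subtype.val_injective, fun r => ?_⟩
  simp only [Set.forall_mem_image]
  refine forall₂_congr fun x _ => ?_
  rw [ConjAct.toRingHom_toConjAct_apply_eq_self_iff, RingHom.comp_apply, inlHom_apply,
    Subring.coe_subtype, commute_oneAddInrUnit_inl_iff, op_smul_eq_mul, smul_eq_mul, eq_comm]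
end

section
/- Let R₀ ⊆ R be rings. Suppose there exist rings {S_i}_{i∈I} and pairs of ring homomorphisms ψ_i^{(1)}, ψ_i^{(2)} : R → S_i such that R₀ = {r ∈ R : ψ_i^{(1)}(r) = ψ_i^{(2)}(r) for all i}. Then there exists a ring S ⊇ R and an automorphism σ of S with σ² = id such that R₀ = {r ∈ R : σ(r) = r}. -/
/-!
Embed `R` into `R × ∏ᵢ (Sᵢ × Sᵢ)` by `r ↦ (r, (ψᵢ⁽¹⁾ r, ψᵢ⁽²⁾ r)ᵢ)`; the first factor makes the
embedding injective. The involution fixing `R` and swapping the two coordinates of every `Sᵢ × Sᵢ`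
fixes the image of `r` exactly when `ψᵢ⁽¹⁾ r = ψᵢ⁽²⁾ r` for all `i`.
-/

namespace EqualizerInvolution

variable {R : Type*} [Ring R] {I : Type*} {S : I → Type*} [∀ i, Ring (S i)]

def pairEmbedding (ψ₁ ψ₂ : ∀ i, R →+* S i) : R →+* R × ∀ i, S i × S i :=
  (RingHom.id R).prod (RingHom.pi fun i => (ψ₁ i).prod (ψ₂ i))

def swapInvolution : (R × ∀ i, S i × S i) ≃+* (R × ∀ i, S i × S i) :=
  (RingEquiv.refl R).prodCongr (RingEquiv.piCongrRight fun _ => RingEquiv.prodComm)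

theorem pairEmbedding_injective (ψ₁ ψ₂ : ∀ i, R →+* S i) :
    Function.Injective (pairEmbedding ψ₁ ψ₂) :=
  fun _ _ h => congrArg Prod.fst h

theorem swapInvolution_trans_self :
    (swapInvolution : (R × ∀ i, S i × S i) ≃+* _).trans swapInvolution = RingEquiv.refl _ := by
  ext <;> rfl

theorem swapInvolution_pairEmbedding_eq_iff (ψ₁ ψ₂ : ∀ i, R →+* S i) (r : R) :
    swapInvolution (pairEmbedding ψ₁ ψ₂ r) = pairEmbedding ψ₁ ψ₂ r ↔ ∀ i, ψ₁ i r = ψ₂ i r := by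
  simp [swapInvolution, pairEmbedding, Prod.ext_iff, funext_iff, eq_comm]

end EqualizerInvolution

open EqualizerInvolution in
/-- If `R₀` is the joint equalizer of pairs of ring homomorphisms `ψᵢ⁽¹⁾, ψᵢ⁽²⁾ : R → Sᵢ`,
then there is a ring `T ⊇ R` (via an injective ring homomorphism) and an automorphism
`σ` of `T` with `σ² = id` such that `R₀ = {r ∈ R : σ(r) = r}`. -/
theorem equalizer_eq_fixed_of_involution
    {R : Type u} [Ring R] {I : Type v} (Sf : I → Type w) [∀ i, Ring (Sf i)]
    (ψ₁ ψ₂ : ∀ i, R →+* Sf i) :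
    ∃ (T : RingCat.{max u v w}) (f : R →+* T) (σ : T ≃+* T),
      Function.Injective f ∧
      σ.trans σ = RingEquiv.refl T ∧
      ∀ r : R, (∀ i, ψ₁ i r = ψ₂ i r) ↔ σ (f r) = f r :=
  ⟨RingCat.of (R × ∀ i, Sf i × Sf i), pairEmbedding ψ₁ ψ₂, swapInvolution,
    pairEmbedding_injective ψ₁ ψ₂, swapInvolution_trans_self,
    fun r => (swapInvolution_pairEmbedding_eq_iff ψ₁ ψ₂ r).symm⟩
end

section
/- Let K be a field. Then the semi-invariant subrings of K are precisely its subfields. In particular, every subring R₀ of K that arises as an equalizer of pairs of ring homomorphisms out of K (into arbitrary rings) is a subfield. -/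
/-!
Equalizers of ring maps out of a field are closed under inversion because inverses of units are
unique. Conversely, a subfield `F ⊆ K` is the equalizer of the two inclusions `K ⇉ K ⊗[F] K`:
`K` is free, hence faithfully flat, over `F`, and faithfully flat descent identifies that
equalizer with the image of `F`.
-/

open TensorProduct

theorem Subfield.setOf_tmul_one_eq_one_tmul {K : Type*} [Field K] (F : Subfield K) :
    {x : K | x ⊗ₜ[F] (1 : K) = 1 ⊗ₜ[F] x} = F :=
  (Algebra.IsEffective.of_faithfullyFlat F K).eqLocus_includeLeft_includeRight.trans
    Subtype.range_coe

/-- The semi-invariant subrings of a field `K` are precisely its subfields.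
(1) Any subring of `K` arising as a joint equalizer of pairs of ring homomorphisms
out of `K` is closed under inverses, i.e. is a subfield.
(2) Conversely, every subfield of `K` is such an equalizer. -/
theorem semiInvariant_subrings_of_field_are_subfields {K : Type u} [Field K] :
    (∀ {I : Type v} (Sf : I → RingCat.{w}) (ψ₁ ψ₂ : ∀ i, K →+* Sf i)
      (R₀ : Subring K),
      (R₀ : Set K) = {x : K | ∀ i, ψ₁ i x = ψ₂ i x} →
      ∀ x ∈ R₀, x⁻¹ ∈ R₀) ∧
    (∀ F : Subfield K,
      ∃ (S' : RingCat.{u}) (φ₁ φ₂ : K →+* S'),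
        {x : K | φ₁ x = φ₂ x} = (F : Set K)) := by
  constructor
  · intro I Sf ψ₁ ψ₂ R₀ hR₀ x hx
    rw [← SetLike.mem_coe, hR₀] at hx ⊢
    exact fun i ↦ eq_on_inv₀ (ψ₁ i) (ψ₂ i) (hx i)
  · intro F
    exact ⟨RingCat.of (K ⊗[F] K), Algebra.TensorProduct.includeLeftRingHom,
      Algebra.TensorProduct.includeRight.toRingHom, F.setOf_tmul_one_eq_one_tmul⟩
end

section
/- Let R be a π-regular ring. Then R is semiperfect if and only if R does not contain an infinite set of nonzero orthogonal idempotents. -/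
/-- The corner ring `eRe` (with unity `e`) is a local ring: `e ≠ 0` and for every
`x ∈ eRe`, either `x` or `e - x` is invertible in `eRe`. -/
def IsLocalCorner {R : Type*} [Ring R] (e : R) : Prop :=
  e ≠ 0 ∧ ∀ x : R, x = e * x * e →
    (∃ y : R, y = e * y * e ∧ x * y = e ∧ y * x = e) ∨
    (∃ y : R, y = e * y * e ∧ (e - x) * y = e ∧ y * (e - x) = e)

/-- A ring is semiperfect iff `1` is a sum of pairwise orthogonal idempotents
whose corner rings are local. -/
def IsSemiperfectRing (R : Type*) [Ring R] : Prop :=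
  ∃ (n : ℕ) (e : Fin n → R),
    (∀ i, IsIdempotentElem (e i)) ∧
    (∀ i j, i ≠ j → e i * e j = 0) ∧
    (∑ i, e i = 1) ∧
    ∀ i, IsLocalCorner (e i)

/-- `R` contains no infinite set of nonzero pairwise orthogonal idempotents. -/
def NoInfiniteOrthogonalIdempotents (R : Type*) [Ring R] : Prop :=
  ¬ ∃ f : ℕ → R, (∀ n, IsIdempotentElem (f n)) ∧ (∀ n, f n ≠ 0) ∧
      ∀ m n, m ≠ n → f m * f n = 0

/-!
(⇒) An exchange argument. Let `E = e₀ + ⋯ + eₙ` with orthogonal idempotents whose corner rings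
`eᵢReᵢ` are local, and let `(f k)` be orthogonal nonzero idempotents in `ERE`. Writing
`E = ∑ f k + r`, the identity `e₀ = ∑ e₀ (f k) e₀ + e₀ r e₀` in the local ring `e₀Re₀` forces some
`e₀ g e₀` (`g` one of the `f j` or `r`) to be a unit. Then all `f k` with `k ≠ j` can be moved into
the corner of `e₁ + ⋯ + eₙ`, and induction bounds the number of `f k` by `n + 1`.

(⇐) Without infinite orthogonal families the order on idempotents is well founded, since a
strictly descending chain has orthogonal nonzero differences. Hence `1` is a finite orthogonal sum
of primitive idempotents `p`. The corner ring `pRp` has no nontrivial idempotents, and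
π-regularity makes each of its elements a unit or nilpotent, so `pRp` is local.
-/

section

variable {R : Type*} [Ring R]

namespace IsIdempotentElem

variable {e : R} (he : IsIdempotentElem e)

def toCorner : R →+ he.Corner where
  toFun x := ⟨e * x * e, x, rfl⟩
  map_zero' := Subtype.ext (by simp; rfl)
  map_add' x y := Subtype.ext (by simp only [mul_add, add_mul]; rfl)

lemma mul_corner_val (x : he.Corner) : e * x.1 = x.1 :=
  ((Subsemigroup.mem_corner_iff he).1 x.2).1

lemma corner_val_mul (x : he.Corner) : x.1 * e = x.1 :=
  ((Subsemigroup.mem_corner_iff he).1 x.2).2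

lemma corner_val_eq_mul_mul (x : he.Corner) : x.1 = e * x.1 * e := by
  rw [he.mul_corner_val, he.corner_val_mul]

lemma corner_pow_val (a : he.Corner) {k : ℕ} (hk : k ≠ 0) : (a ^ k).1 = a.1 ^ k := by
  obtain ⟨k, rfl⟩ := Nat.exists_eq_succ_of_ne_zero hk
  induction k with
  | zero => simp
  | succ k ih => rw [pow_succ, pow_succ a.1, ← ih k.succ_ne_zero]; rfl

lemma isUnit_corner_iff {x : he.Corner} :
    IsUnit x ↔ ∃ y : R, y = e * y * e ∧ x.1 * y = e ∧ y * x.1 = e := by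
  constructor
  · rintro ⟨u, rfl⟩
    exact ⟨u⁻¹.1.1, he.corner_val_eq_mul_mul _, congrArg Subtype.val u.mul_inv,
      congrArg Subtype.val u.inv_mul⟩
  · rintro ⟨y, hy, hxy, hyx⟩
    exact isUnit_iff_exists.2 ⟨⟨y, y, hy.symm⟩, Subtype.ext hxy, Subtype.ext hyx⟩

lemma isLocalCorner_iff_isLocalRing : IsLocalCorner e ↔ IsLocalRing he.Corner := by
  constructor
  · rintro ⟨he0, hloc⟩
    have : Nontrivial he.Corner := nontrivial_of_ne 0 1 fun h ↦ he0 (congrArg Subtype.val h).symm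
    refine IsLocalRing.of_isUnit_or_isUnit_one_sub_self fun a ↦ ?_
    simp only [he.isUnit_corner_iff]
    exact hloc a.1 (he.corner_val_eq_mul_mul a)
  · intro hloc
    refine ⟨fun he0 ↦ zero_ne_one (α := he.Corner) (Subtype.ext he0.symm), fun x hx ↦ ?_⟩
    let a : he.Corner := ⟨x, x, hx.symm⟩
    have := IsLocalRing.isUnit_or_isUnit_of_add_one (add_sub_cancel a 1)
    rwa [he.isUnit_corner_iff, he.isUnit_corner_iff] at this

end IsIdempotentElem

lemma OrthogonalIdempotents.sum_mul_of_mem {ι : Type*} {f : ι → R} (hf : OrthogonalIdempotents f)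
    {i : ι} {s : Finset ι} (h : i ∈ s) : (∑ j ∈ s, f j) * f i = f i := by
  classical
  simp [Finset.sum_mul, hf.mul_eq, h]

lemma IsLocalCorner.exists_mul_mul_eq_of_sum {e : R} (hloc : IsLocalCorner e)
    (he : IsIdempotentElem e) {ι : Type*} {s : Finset ι} {x : ι → R}
    (hsum : e * (∑ i ∈ s, x i) * e = e) : ∃ i ∈ s, ∃ y, e * x i * y = e := by
  have := he.isLocalCorner_iff_isLocalRing.1 hloc
  have hunit : IsUnit (∑ i ∈ s, he.toCorner (x i)) := by
    rw [← map_sum, show he.toCorner (∑ i ∈ s, x i) = 1 from Subtype.ext hsum]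
    exact isUnit_one
  obtain ⟨i, hi, hu⟩ := IsLocalRing.exists_of_isUnit_sum hunit
  obtain ⟨b, hb⟩ := hu.exists_right_inv
  exact ⟨i, hi, e * b.1, by rw [← mul_assoc]; exact congrArg Subtype.val hb⟩

lemma IsLocalCorner.exists_exchange {e E : R} (hloc : IsLocalCorner e) (he : IsIdempotentElem e)
    (hE : IsIdempotentElem E) (heE : e * E = e) {ι : Type*} [Fintype ι] [Nonempty ι]
    {f : ι → R} (hf : OrthogonalIdempotents f) (hfE : ∀ k, E * f k = f k ∧ f k * E = f k) :
    ∃ j g y, E * g = g ∧ e * g * y = e ∧ ∀ k ≠ j, f k * g = 0 := by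
  set r := E - ∑ k, f k
  have hEf : E * ∑ k, f k = ∑ k, f k := by
    rw [Finset.mul_sum]; exact Finset.sum_congr rfl fun k _ ↦ (hfE k).1
  have hfr : ∀ k, f k * r = 0 := fun k ↦ by
    rw [mul_sub, (hfE k).2, hf.mul_sum_of_mem (Finset.mem_univ k), sub_self]
  have hsum : e * (∑ o : Option ι, o.elim r f) * e = e := by
    simp only [Fintype.sum_option, Option.elim_none, Option.elim_some]
    rw [sub_add_cancel, heE, he.eq]
  obtain ⟨o, -, y, hy⟩ := hloc.exists_mul_mul_eq_of_sum he hsum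
  cases o with
  | none => exact ⟨Classical.arbitrary ι, r, y, by rw [mul_sub, hE.eq, hEf], hy, fun k _ ↦ hfr k⟩
  | some j => exact ⟨j, f j, y, (hfE j).1, hy, fun k hk ↦ hf.ortho hk⟩

lemma OrthogonalIdempotents.mul_mul {ι : Type*} {f : ι → R} {a b : R}
    (hf : OrthogonalIdempotents f) (hba : b * a = a) (hfa : ∀ k, f k * a = f k) :
    OrthogonalIdempotents (fun k ↦ a * f k * b) where
  idem k := by
    calc a * f k * b * (a * f k * b) = a * (f k * (b * a) * f k) * b := by noncomm_ring
    _ = a * f k * b := by rw [hba, hfa, (hf.idem k).eq]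
  ortho j k hjk := by
    calc a * f j * b * (a * f k * b) = a * (f j * (b * a) * f k) * b := by noncomm_ring
    _ = 0 := by rw [hba, hfa, hf.ortho hjk, mul_zero, zero_mul]

lemma mul_mul_ne_zero {a b f : R} (hba : b * a = a) (hf : IsIdempotentElem f) (hfa : f * a = f)
    (hf0 : f ≠ 0) : a * f * b ≠ 0 := by
  intro h
  apply hf0
  calc f = f * a * f * (b * a) := by rw [hba, hfa, hf.eq, hfa]
  _ = f * (a * f * b) * a := by noncomm_ring
  _ = 0 := by rw [h, mul_zero, zero_mul]

theorem OrthogonalIdempotents.card_le_of_isLocalCorner {n : ℕ} {e : Fin n → R}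
    (he : OrthogonalIdempotents e) (hloc : ∀ i, IsLocalCorner (e i)) {ι : Type*} [Fintype ι]
    {f : ι → R} (hf : OrthogonalIdempotents f) (hf0 : ∀ k, f k ≠ 0)
    (hfE : ∀ k, (∑ i, e i) * f k = f k ∧ f k * ∑ i, e i = f k) : Fintype.card ι ≤ n := by
  induction n generalizing ι with
  | zero =>
    simp only [Finset.univ_eq_empty, Finset.sum_empty, zero_mul] at hfE
    exact (Fintype.card_eq_zero_iff.2 ⟨fun k ↦ hf0 k (hfE k).1.symm⟩).le
  | succ n ih =>
    cases isEmpty_or_nonempty ι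
    · simp
    classical
    set E := ∑ i, e i
    set b := ∑ i : Fin n, e i.succ
    have hEb : E = e 0 + b := Fin.sum_univ_succ e
    have hE : IsIdempotentElem E := he.isIdempotentElem_sum
    have hb : IsIdempotentElem b := (he.embedding (Fin.succEmb n)).isIdempotentElem_sum
    have h0E : e 0 * E = e 0 := he.mul_sum_of_mem (Finset.mem_univ 0)
    obtain ⟨j, g, y, hEg, hgy, hfg⟩ := (hloc 0).exists_exchange (he.idem 0) hE h0E hf hfE
    -- `x ↦ a * x * b` carries the `f k`, `k ≠ j`, into the corner of `b = E - e 0`.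
    set a := E - g * y
    have hba : b * a = a := by
      calc b * a = E * E - E * g * y - e 0 * E + e 0 * g * y := by
            rw [eq_sub_of_add_eq' hEb.symm]; simp only [a]; noncomm_ring
      _ = a := by rw [hE.eq, hEg, h0E, hgy, sub_add_cancel]
    have hfa : ∀ k ≠ j, f k * a = f k := fun k hk ↦ by
      rw [mul_sub, (hfE k).2, ← mul_assoc, hfg k hk, zero_mul, sub_zero]
    have hcard := ih (e := fun i ↦ e i.succ) (he.embedding (Fin.succEmb n)) (fun i ↦ hloc i.succ)
      (f := fun k : {k // k ≠ j} ↦ a * f k * b)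
      ((hf.embedding (Function.Embedding.subtype _)).mul_mul hba fun k ↦ hfa k k.2)
      (fun k ↦ mul_mul_ne_zero hba (hf.idem k) (hfa k k.2) (hf0 k))
      (fun k ↦ ⟨by rw [← mul_assoc, ← mul_assoc, hba], by rw [mul_assoc, hb.eq]⟩)
    rw [← Fintype.card_congr (Equiv.optionSubtypeNe j), Fintype.card_option]
    exact Nat.succ_le_succ hcard

theorem IsSemiperfectRing.noInfiniteOrthogonalIdempotents (hs : IsSemiperfectRing R) :
    NoInfiniteOrthogonalIdempotents R := by
  rintro ⟨f, hfi, hf0, hfo⟩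
  obtain ⟨n, e, hei, heo, hsum, hloc⟩ := hs
  have := OrthogonalIdempotents.card_le_of_isLocalCorner ⟨hei, fun i j h ↦ heo i j h⟩ hloc
    (f := fun k : Fin (n + 1) ↦ f k) ⟨fun k ↦ hfi k, fun j k h ↦ hfo _ _ (Fin.val_injective.ne h)⟩
    (fun k ↦ hf0 k) fun k ↦ by simp [hsum]
  simp at this

lemma IsPiRegularElem.exists_pow_eq {a : R} (h : IsPiRegularElem a) :
    ∃ n ≠ 0, (∃ u, a ^ n = a ^ (2 * n) * u) ∧ ∃ v, a ^ n = v * a ^ (2 * n) := by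
  obtain ⟨⟨nr, hr⟩, ⟨nl, hl⟩⟩ := h
  set N := max nr nl + 1
  have hright : a ^ N ∈ {x : R | ∃ u, x = a ^ (2 * N) * u} := by
    rw [hr (2 * N) (by omega), ← hr N (by omega)]; exact ⟨1, (mul_one _).symm⟩
  have hleft : a ^ N ∈ {x : R | ∃ v, x = v * a ^ (2 * N)} := by
    rw [hl (2 * N) (by omega), ← hl N (by omega)]; exact ⟨1, (one_mul _).symm⟩
  exact ⟨N, by omega, hright, hleft⟩

/-- `aⁿu = vaⁿ` is an idempotent: `0`, and then `aⁿ = 0`, or `1`, and then `aⁿ` is a unit. -/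
theorem isUnit_or_isNilpotent_of_pow_eq {D : Type*} [Ring D]
    (hidem : ∀ f : D, IsIdempotentElem f → f = 0 ∨ f = 1) {a : D} {n : ℕ} (hn : n ≠ 0)
    {u v : D} (hu : a ^ n = a ^ (2 * n) * u) (hv : a ^ n = v * a ^ (2 * n)) :
    IsUnit a ∨ IsNilpotent a := by
  rw [two_mul, pow_add] at hu hv
  set w := a ^ n
  have hvw : v * w = w * u := by
    calc v * w = v * (w * w * u) := by rw [← hu]
    _ = v * (w * w) * u := by noncomm_ring
    _ = w * u := by rw [← hv]
  have hwu : IsIdempotentElem (w * u) := by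
    calc w * u * (w * u) = v * w * (w * u) := by rw [hvw]
    _ = v * (w * w) * u := by noncomm_ring
    _ = w * u := by rw [← hv]
  rcases hidem _ hwu with h0 | h1
  · exact Or.inr ⟨n, show w = 0 by rw [hu, mul_assoc, h0, mul_zero]⟩
  · have hvw1 : v * w = 1 := hvw.trans h1
    refine Or.inl ((isUnit_pow_iff hn).1 (isUnit_iff_exists.2 ⟨u, h1, ?_⟩))
    rwa [← left_inv_eq_right_inv hvw1 h1]

theorem isLocalCorner_of_forall_isPiRegularElem (h : ∀ a : R, IsPiRegularElem a) {p : R}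
    (hp : IsIdempotentElem p) (hp0 : p ≠ 0)
    (hprim : ∀ g, IsIdempotentElem g → p * g = g → g * p = g → g = 0 ∨ g = p) :
    IsLocalCorner p := by
  rw [hp.isLocalCorner_iff_isLocalRing]
  have : Nontrivial hp.Corner := nontrivial_of_ne 0 1 fun h0 ↦ hp0 (congrArg Subtype.val h0).symm
  have hidem (f : hp.Corner) (hf : IsIdempotentElem f) : f = 0 ∨ f = 1 := by
    rcases hprim f.1 (congrArg Subtype.val hf) (hp.mul_corner_val f) (hp.corner_val_mul f)
      with h0 | h1
    exacts [Or.inl (Subtype.ext h0), Or.inr (Subtype.ext h1)]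
  refine IsLocalRing.of_isUnit_or_isUnit_one_sub_self fun a ↦ ?_
  obtain ⟨n, hn, ⟨u, hu⟩, ⟨v, hv⟩⟩ := (h a.1).exists_pow_eq
  have h2n : 2 * n ≠ 0 := by omega
  have hu' : a ^ n = a ^ (2 * n) * hp.toCorner u := Subtype.ext <|
    calc (a ^ n).1 = a.1 ^ (2 * n) * u * p := by
          rw [hp.corner_pow_val a hn, ← hu, ← hp.corner_pow_val a hn, hp.corner_val_mul]
    _ = (a ^ (2 * n)).1 * (p * u * p) := by
      rw [← mul_assoc, ← mul_assoc, hp.corner_val_mul, hp.corner_pow_val a h2n]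
  have hv' : a ^ n = hp.toCorner v * a ^ (2 * n) := Subtype.ext <|
    calc (a ^ n).1 = p * (v * a.1 ^ (2 * n)) := by
          rw [hp.corner_pow_val a hn, ← hv, ← hp.corner_pow_val a hn, hp.mul_corner_val]
    _ = (p * v * p) * (a ^ (2 * n)).1 := by
      rw [mul_assoc _ p, hp.mul_corner_val, hp.corner_pow_val a h2n, mul_assoc]
  exact (isUnit_or_isNilpotent_of_pow_eq hidem hn hu' hv').imp_right IsNilpotent.isUnit_one_sub

lemma OrthogonalIdempotents.mul_eq_zero_of_sum_mul_sum {ι κ : Type*} [Fintype ι] [Fintype κ]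
    {q : ι → R} {q' : κ → R} (hq : OrthogonalIdempotents q) (hq' : OrthogonalIdempotents q')
    (h : (∑ i, q i) * ∑ j, q' j = 0) (i : ι) (j : κ) : q i * q' j = 0 := by
  rw [← hq.mul_sum_of_mem (Finset.mem_univ i), ← hq'.sum_mul_of_mem (Finset.mem_univ j),
    mul_assoc, ← mul_assoc (∑ i, q i), h, zero_mul, mul_zero]

lemma OrthogonalIdempotents.append {n m : ℕ} {q : Fin n → R} {q' : Fin m → R}
    (hq : OrthogonalIdempotents q) (hq' : OrthogonalIdempotents q')
    (h₁ : (∑ i, q i) * ∑ j, q' j = 0) (h₂ : (∑ j, q' j) * ∑ i, q i = 0) :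
    OrthogonalIdempotents (Fin.append q q') := by
  refine ⟨fun i ↦ ?_, fun i j hij ↦ ?_⟩
  · induction i using Fin.addCases <;> simp [hq.idem, hq'.idem]
  · induction i using Fin.addCases <;> induction j using Fin.addCases <;>
      simp only [Fin.append_left, Fin.append_right]
    · exact hq.ortho fun h ↦ hij (by rw [h])
    · exact hq.mul_eq_zero_of_sum_mul_sum hq' h₁ _ _
    · exact hq'.mul_eq_zero_of_sum_mul_sum hq h₂ _ _
    · exact hq'.ortho fun h ↦ hij (by rw [h])

lemma orthogonalIdempotents_sub_succ {d : ℕ → R} (hd : ∀ n, IsIdempotentElem (d n))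
    (hsucc : ∀ n, d n * d (n + 1) = d (n + 1) ∧ d (n + 1) * d n = d (n + 1)) :
    OrthogonalIdempotents fun n ↦ d n - d (n + 1) := by
  have hle (m n : ℕ) (hmn : m ≤ n) : d m * d n = d n ∧ d n * d m = d n := by
    induction n, hmn using Nat.le_induction with
    | base => exact ⟨(hd m).eq, (hd m).eq⟩
    | succ n _ ih =>
      exact ⟨by rw [← (hsucc n).1, ← mul_assoc, ih.1], by rw [← (hsucc n).2, mul_assoc, ih.2]⟩
  refine ⟨fun n ↦ (hd (n + 1)).sub (hd n) (hsucc n).2 (hsucc n).1, fun m n hmn ↦ ?_⟩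
  rcases hmn.lt_or_gt with hlt | hlt
  · simp only [mul_sub, sub_mul, (hle m n hlt.le).1, (hle m (n + 1) (by omega)).1,
      (hle (m + 1) n hlt).1, (hle (m + 1) (n + 1) (by omega)).1, sub_self]
  · simp only [mul_sub, sub_mul, (hle n m hlt.le).2, (hle (n + 1) m hlt).2,
      (hle n (m + 1) (by omega)).2, (hle (n + 1) (m + 1) (by omega)).2, sub_self]

def IdempotentLT (f e : R) : Prop :=
  IsIdempotentElem f ∧ e * f = f ∧ f * e = f ∧ f ≠ e

theorem NoInfiniteOrthogonalIdempotents.wellFounded (hno : NoInfiniteOrthogonalIdempotents R) :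
    WellFounded (IdempotentLT (R := R)) := by
  refine wellFounded_iff_isEmpty_descending_chain.2 ⟨fun ⟨c, hc⟩ ↦ hno ?_⟩
  have hd := orthogonalIdempotents_sub_succ (d := fun n ↦ c (n + 1)) (fun n ↦ (hc n).1)
    fun n ↦ ⟨(hc (n + 1)).2.1, (hc (n + 1)).2.2.1⟩
  exact ⟨_, hd.idem, fun n ↦ sub_ne_zero.2 (hc (n + 1)).2.2.2.symm, fun _ _ h ↦ hd.ortho h⟩

theorem exists_orthogonalIdempotents_isLocalCorner (h : ∀ a : R, IsPiRegularElem a)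
    (hno : NoInfiniteOrthogonalIdempotents R) {e : R} (he : IsIdempotentElem e) :
    ∃ (n : ℕ) (q : Fin n → R), OrthogonalIdempotents q ∧ ∑ i, q i = e ∧
      ∀ i, IsLocalCorner (q i) := by
  induction e using hno.wellFounded.induction with
  | _ e ih =>
    by_cases he0 : e = 0
    · exact ⟨0, Fin.elim0, ⟨fun i ↦ i.elim0, fun i ↦ i.elim0⟩, by simp [he0], fun i ↦ i.elim0⟩
    by_cases hprim : ∀ g, IsIdempotentElem g → e * g = g → g * e = g → g = 0 ∨ g = e
    · exact ⟨1, fun _ ↦ e, OrthogonalIdempotents.unique.2 he, by simp,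
        fun _ ↦ isLocalCorner_of_forall_isPiRegularElem h he he0 hprim⟩
    push Not at hprim
    obtain ⟨g, hg, heg, hge, hg0, hgne⟩ := hprim
    have hg' : IsIdempotentElem (e - g) := hg.sub he hge heg
    have hgg' : g * (e - g) = 0 := by rw [mul_sub, hge, hg.eq, sub_self]
    have hg'g : (e - g) * g = 0 := by rw [sub_mul, heg, hg.eq, sub_self]
    obtain ⟨n, q, hq, hqsum, hqloc⟩ := ih g ⟨hg, heg, hge, hgne⟩ hg
    obtain ⟨m, q', hq', hq'sum, hq'loc⟩ := ih (e - g)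
      ⟨hg', by rw [mul_sub, he.eq, heg], by rw [sub_mul, he.eq, hge], by simpa using hg0⟩ hg'
    refine ⟨n + m, Fin.append q q', hq.append hq' (by rw [hqsum, hq'sum, hgg'])
      (by rw [hqsum, hq'sum, hg'g]), by simp [Fin.sum_univ_add, hqsum, hq'sum], fun i ↦ ?_⟩
    induction i using Fin.addCases <;> simp [hqloc, hq'loc]

end

/-- A π-regular ring is semiperfect iff it contains no infinite set of nonzero
orthogonal idempotents. -/
theorem piRegular_semiperfect_iff {R : Type*} [Ring R]
    (h : ∀ a : R, IsPiRegularElem a) :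
    IsSemiperfectRing R ↔ NoInfiniteOrthogonalIdempotents R := by
  refine ⟨IsSemiperfectRing.noInfiniteOrthogonalIdempotents, fun hno ↦ ?_⟩
  obtain ⟨n, e, he, hsum, hloc⟩ :=
    exists_orthogonalIdempotents_isLocalCorner h hno IsIdempotentElem.one
  exact ⟨n, e, he.idem, fun i j hij ↦ he.ortho hij, hsum, hloc⟩
end

section
/- Let R ⊆ S be rings, let Σ be a set of ring endomorphisms of S, and suppose D ⊆ R is a division ring with σ(D) ⊆ D for all σ ∈ Σ. Then the dimension of R^Σ as a left vector space over D^Σ is at most the dimension of R as a left vector space over D. -/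
/-- The subring of elements of `R` fixed by every endomorphism in `E`. -/
def fixedSubring {S : Type*} [Ring S] (R : Subring S) (E : Set (S →+* S)) :
    Subring S where
  carrier := {x : S | x ∈ R ∧ ∀ σ ∈ E, σ x = x}
  zero_mem' := ⟨R.zero_mem, fun σ _ => map_zero σ⟩
  one_mem' := ⟨R.one_mem, fun σ _ => map_one σ⟩
  add_mem' := by
    rintro a b ⟨ha, ha'⟩ ⟨hb, hb'⟩
    exact ⟨R.add_mem ha hb, fun σ hσ => by rw [map_add, ha' σ hσ, hb' σ hσ]⟩
  mul_mem' := by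
    rintro a b ⟨ha, ha'⟩ ⟨hb, hb'⟩
    exact ⟨R.mul_mem ha hb, fun σ hσ => by rw [map_mul, ha' σ hσ, hb' σ hσ]⟩
  neg_mem' := by
    rintro a ⟨ha, ha'⟩
    exact ⟨R.neg_mem ha, fun σ hσ => by rw [map_neg, ha' σ hσ]⟩

lemma coe_linearCombination_subring {S : Type*} [Ring S] (T A : Subring S)
    [Module ↥A ↥T] (hs : ∀ (d : ↥A) (r : ↥T), ((d • r : ↥T) : S) = (d : S) * (r : S))
    {ι : Type*} (w : ι → ↥T) (l : ι →₀ ↥A) :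
    ((Finsupp.linearCombination ↥A w l : ↥T) : S)
      = ∑ j ∈ l.support, (l j : S) * (w j : S) := by
  rw [Finsupp.linearCombination_apply, Finsupp.sum, AddSubmonoidClass.coe_finset_sum]
  exact Finset.sum_congr rfl fun j _ => hs _ _

lemma key_linearIndependent {S : Type*} [Ring S] [Nontrivial S] (R D : Subring S)
    (E : Set (S →+* S)) (hDfix : ∀ σ ∈ E, ∀ x ∈ D, σ x ∈ D)
    (hdiv : ∀ x : ↥D, x ≠ 0 → IsUnit x)
    [Module ↥D ↥R]
    (hsmul : ∀ (d : ↥D) (r : ↥R), ((d • r : ↥R) : S) = (d : S) * (r : S))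
    [Module ↥(fixedSubring D E) ↥(fixedSubring R E)]
    (hsmul' : ∀ (d : ↥(fixedSubring D E)) (r : ↥(fixedSubring R E)),
      ((d • r : ↥(fixedSubring R E)) : S) = (d : S) * (r : S))
    {ι : Type*} (v : ι → ↥(fixedSubring R E))
    (hv : LinearIndependent ↥(fixedSubring D E) v) :
    LinearIndependent ↥D (fun i => (⟨(v i : S), (v i).2.1⟩ : ↥R)) := by
  set w : ι → ↥R := fun i => (⟨(v i : S), (v i).2.1⟩ : ↥R) with hw
  classical
  rw [linearIndependent_iff] at hv ⊢
  suffices H : ∀ n : ℕ, ∀ l : ι →₀ ↥D, l.support.card ≤ n →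
      Finsupp.linearCombination ↥D w l = 0 → l = 0 from fun l hl => H _ l le_rfl hl
  intro n
  induction n using Nat.strong_induction_on with
  | _ n ih =>
    intro l hcard hl
    by_contra hlne
    obtain ⟨i, hi⟩ : l.support.Nonempty := Finsupp.support_nonempty_iff.mpr hlne
    have hdi : l i ≠ 0 := Finsupp.mem_support_iff.mp hi
    obtain ⟨u, hu⟩ := hdiv (l i) hdi
    set m : ι →₀ ↥D := ((u⁻¹ : (↥D)ˣ) : ↥D) • l with hmdef
    have hm0 : Finsupp.linearCombination ↥D w m = 0 := by
      rw [hmdef, map_smul, hl, smul_zero]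
    have hmsupp : m.support = l.support := by
      ext j
      simp only [hmdef, Finsupp.mem_support_iff, Finsupp.smul_apply, smul_eq_mul]
      exact not_congr (Units.mul_right_eq_zero u⁻¹)
    have hmS : ((Finsupp.linearCombination ↥D w m : ↥R) : S) = 0 := by rw [hm0]; rfl
    have hmsum : ∑ j ∈ m.support, (m j : S) * (v j : S) = 0 := by
      rw [← coe_linearCombination_subring R D hsmul w m, hmS]
    have hmi : m i = 1 := by
      simp only [hmdef, Finsupp.smul_apply, smul_eq_mul, ← hu]
      exact_mod_cast u.inv_mul
    have hfix : ∀ σ ∈ E, ∀ j, σ (m j : S) = (m j : S) := by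
      intro σ hσ
      set f : ↥D → ↥D := fun d => (⟨σ d, hDfix σ hσ d d.2⟩ : ↥D) - d with hf
      have hf0 : f 0 = 0 := by
        simp only [hf]
        ext
        simp
      set lσ : ι →₀ ↥D := Finsupp.mapRange f hf0 m with hlσdef
      have hlσval : ∀ j, (lσ j : S) = σ (m j : S) - (m j : S) := by
        intro j
        simp [hlσdef, hf, Finsupp.mapRange_apply]
      have hlσ : Finsupp.linearCombination ↥D w lσ = 0 := by
        apply Subtype.ext
        rw [coe_linearCombination_subring R D hsmul w lσ]
        rw [Finset.sum_subset (Finsupp.support_mapRange (hf := hf0))]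
        · have : ∑ j ∈ m.support, (lσ j : S) * (v j : S)
              = ∑ j ∈ m.support, (σ ((m j : S) * (v j : S)) - (m j : S) * (v j : S)) := by
            refine Finset.sum_congr rfl fun j _ => ?_
            rw [hlσval j, map_mul, (v j).2.2 σ hσ, sub_mul]
          rw [show ((0 : ↥R) : S) = 0 from rfl]
          rw [this, Finset.sum_sub_distrib, ← map_sum, hmsum, map_zero, sub_zero]
        · intro j _ hj
          rw [Finsupp.notMem_support_iff.mp hj]
          simp
      have hinotin : i ∉ lσ.support := by
        rw [Finsupp.mem_support_iff]
        simp only [hlσdef, Finsupp.mapRange_apply, hmi, ne_eq, not_not, hf]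
        ext
        simp
      have hlt : lσ.support.card < n := by
        have h1 : lσ.support ⊆ m.support.erase i :=
          Finset.subset_erase.mpr ⟨Finsupp.support_mapRange, hinotin⟩
        have h2 : (m.support.erase i).card < m.support.card :=
          Finset.card_erase_lt_of_mem (by rw [hmsupp]; exact hi)
        calc lσ.support.card ≤ (m.support.erase i).card := Finset.card_le_card h1
          _ < m.support.card := h2
          _ ≤ n := by rw [hmsupp]; exact hcard
      have hz : lσ = 0 := ih _ hlt lσ le_rfl hlσ
      intro j
      have : lσ j = 0 := by rw [hz]; rfl
      have h3 : (⟨σ (m j : S), hDfix σ hσ _ (m j).2⟩ : ↥D) = m j := by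
        have := sub_eq_zero.mp (by simpa [hlσdef, Finsupp.mapRange_apply, hf] using this)
        exact this
      exact congrArg Subtype.val h3
    -- build the coefficient family over the fixed division ring
    set m' : ι →₀ ↥(fixedSubring D E) :=
      Finsupp.onFinset m.support
        (fun j => (⟨(m j : S), (m j).2, fun σ hσ => hfix σ hσ j⟩ : ↥(fixedSubring D E)))
        (by
          intro j hj
          rw [Finsupp.mem_support_iff]
          intro h0
          apply hj
          ext
          simp [h0]) with hm'def
    have hm'val : ∀ j, (m' j : S) = (m j : S) := fun j => rfl
    have hm'0 : Finsupp.linearCombination ↥(fixedSubring D E) v m' = 0 := by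
      apply Subtype.ext
      rw [coe_linearCombination_subring (fixedSubring R E) (fixedSubring D E) hsmul' v m']
      rw [Finset.sum_subset (Finsupp.support_onFinset_subset)]
      · rw [show ((0 : ↥(fixedSubring R E)) : S) = 0 from rfl]
        rw [← hmsum]
        exact Finset.sum_congr rfl fun j _ => by rw [hm'val]
      · intro j _ hj
        rw [Finsupp.notMem_support_iff.mp hj]
        simp
    have hc := hv m' hm'0
    have : (m' i : S) = 0 := by rw [hc]; rfl
    rw [hm'val, hmi] at this
    exact one_ne_zero (α := S) this

/-- Let `D ⊆ R ⊆ S` with `D` a division ring, and let `E` be a set of ring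
endomorphisms of `S` with `σ(D) ⊆ D` for all `σ ∈ E`. Then the dimension of
`R^E` as a left `D^E`-vector space is at most the dimension of `R` as a left
`D`-vector space. (The left vector space structures, given by multiplication
in `S`, are supplied as instances pinned down by `hsmul` and `hsmul'`.) -/
theorem rank_fixed_le {S : Type u} [Ring S] (R D : Subring S) (hDR : D ≤ R)
    (E : Set (S →+* S)) (hDfix : ∀ σ ∈ E, ∀ x ∈ D, σ x ∈ D)
    (hdiv : ∀ x : ↥D, x ≠ 0 → IsUnit x)
    [Module ↥D ↥R]
    (hsmul : ∀ (d : ↥D) (r : ↥R), ((d • r : ↥R) : S) = (d : S) * (r : S))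
    [Module ↥(fixedSubring D E) ↥(fixedSubring R E)]
    (hsmul' : ∀ (d : ↥(fixedSubring D E)) (r : ↥(fixedSubring R E)),
      ((d • r : ↥(fixedSubring R E)) : S) = (d : S) * (r : S)) :
    Module.rank ↥(fixedSubring D E) ↥(fixedSubring R E) ≤ Module.rank ↥D ↥R := by
  rcases subsingleton_or_nontrivial S with hS | hS
  · haveI : Subsingleton ↥D := ⟨fun a b => Subtype.ext (Subsingleton.elim _ _)⟩
    haveI : Subsingleton ↥(fixedSubring D E) :=
      ⟨fun a b => Subtype.ext (Subsingleton.elim _ _)⟩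
    rw [rank_subsingleton, rank_subsingleton]
  · haveI : Nontrivial ↥D := ⟨⟨0, 1, fun h => zero_ne_one (α := S) (congrArg Subtype.val h)⟩⟩
    rw [Module.rank_def ↥(fixedSubring D E)]
    refine ciSup_le' fun ⟨s, hs⟩ => ?_
    exact (key_linearIndependent R D E hDfix hdiv hsmul hsmul'
      (fun x : s => (x : ↥(fixedSubring R E))) hs).cardinal_le_rank
end

section
/- Let R be a ring in which every element a admits an idempotent e (depending on a) with a = eae + faf (f = 1-e), eae invertible in eRe, and faf nilpotent, and suppose that for every a ∈ R this idempotent e lies in {0, 1}. Then R is a local ring: for every a ∈ R, either a or 1 - a is invertible. -/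
theorem local_of_trivial_associated_idempotents_general
    {R : Type*} [Ring R]
    (h : ∀ a : R, ∃ e : R, (e = 0 ∨ e = 1) ∧ IsIdempotentElem e ∧
      a = e * a * e + (1 - e) * a * (1 - e) ∧
      (∃ b : R, b = e * b * e ∧ (e * a * e) * b = e ∧ b * (e * a * e) = e) ∧
      IsNilpotent ((1 - e) * a * (1 - e))) :
    ∀ a : R, IsUnit a ∨ IsUnit (1 - a) := by
  intro a
  obtain ⟨e, he, -, -, ⟨b, -, hab, hba⟩, hnil⟩ := h a
  rcases he with rfl | rfl
  · rw [sub_zero, one_mul, mul_one] at hnil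
    exact Or.inr hnil.isUnit_one_sub
  · rw [one_mul, mul_one] at hab hba
    exact Or.inl ⟨⟨a, b, hab, hba⟩, rfl⟩

/-- Suppose every element `a` of a nonzero ring `R` admits an idempotent `e` with
`a = eae + faf` (`f = 1 - e`), `eae` invertible in `eRe`, `faf` nilpotent, and
this idempotent always lies in `{0, 1}`. Then `R` is local: for every `a`,
either `a` or `1 - a` is invertible. -/
theorem local_of_trivial_associated_idempotents
    {R : Type*} [Ring R] [Nontrivial R]
    (h : ∀ a : R, ∃ e : R, (e = 0 ∨ e = 1) ∧ IsIdempotentElem e ∧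
      a = e * a * e + (1 - e) * a * (1 - e) ∧
      (∃ b : R, b = e * b * e ∧ (e * a * e) * b = e ∧ b * (e * a * e) = e) ∧
      IsNilpotent ((1 - e) * a * (1 - e))) :
    ∀ a : R, IsUnit a ∨ IsUnit (1 - a) :=
  local_of_trivial_associated_idempotents_general h
end

section
/- Let R be a right noetherian ring that is π-regular. Then R is right artinian. In particular, for right noetherian rings the properties right artinian, semiprimary, right perfect, and π-regular all coincide. -/
open Ideal LinearMap

/-- π-regularity in von Neumann's sense; it is implied by the chain condition `IsPiRegularElem`
(strong π-regularity). -/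
def HasRegularPowers (R : Type*) [Ring R] : Prop :=
  ∀ a : R, ∃ n ≠ 0, ∃ b, a ^ n = a ^ n * b * a ^ n

def IsSemiprimeRing (R : Type*) [Ring R] : Prop :=
  ∀ a : R, (∀ r, a * r * a = 0) → a = 0

section

variable {R : Type*} [Ring R]

theorem IsPiRegularElem.exists_pow_eq_pow_mul_mul_pow {a : R} (ha : IsPiRegularElem a) :
    ∃ n ≠ 0, ∃ b, a ^ n = a ^ n * b * a ^ n := by
  obtain ⟨⟨n₁, h₁⟩, ⟨n₂, h₂⟩⟩ := ha
  set n := max n₁ n₂ + 1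
  obtain ⟨d, hd⟩ : a ^ n ∈ {x : R | ∃ r, x = a ^ (n + n) * r} := by
    rw [h₁ _ (by omega), ← h₁ n (by omega)]
    exact ⟨1, (mul_one _).symm⟩
  obtain ⟨c, hc⟩ : a ^ n ∈ {x : R | ∃ r, x = r * a ^ (n + n)} := by
    rw [h₂ _ (by omega), ← h₂ n (by omega)]
    exact ⟨1, (one_mul _).symm⟩
  refine ⟨n, by omega, d, ?_⟩
  calc a ^ n = c * a ^ (n + n) := hc
    _ = c * (a ^ (n + n) * d) * a ^ n := by rw [← hd, pow_add, mul_assoc]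
    _ = a ^ n * d * a ^ n := by rw [← mul_assoc, ← hc]

theorem HasRegularPowers.mulOpposite (h : HasRegularPowers R) : HasRegularPowers Rᵐᵒᵖ := by
  intro a
  obtain ⟨n, hn, b, hb⟩ := h a.unop
  refine ⟨n, hn, .op b, MulOpposite.unop_injective ?_⟩
  simpa [mul_assoc] using hb

theorem HasRegularPowers.of_surjective {S : Type*} [Ring S] (h : HasRegularPowers R) (f : R →+* S)
    (hf : Function.Surjective f) : HasRegularPowers S := by
  intro s
  obtain ⟨a, rfl⟩ := hf s
  obtain ⟨n, hn, b, hb⟩ := h a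
  exact ⟨n, hn, f b, by rw [← map_pow, ← map_mul, ← map_mul, ← hb]⟩

theorem Ideal.le_jacobson_of_forall_isNilpotent {I : Ideal R} (hI : ∀ x ∈ I, IsNilpotent x) :
    I ≤ Ring.jacobson R := by
  intro x hx
  rw [← jacobson_bot, mem_jacobson_iff]
  intro y
  obtain ⟨u, hu⟩ := (hI _ (I.mul_mem_left y hx)).isUnit_one_add
  refine ⟨↑u⁻¹, ?_⟩
  rw [Submodule.mem_bot, mul_assoc, ← mul_add_one, add_comm, ← hu, Units.inv_mul, sub_self]

theorem Ideal.le_jacobson_of_isNilpotent {I : Ideal R} (hI : IsNilpotent I) :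
    I ≤ Ring.jacobson R := by
  obtain ⟨n, hn⟩ := hI
  exact le_jacobson_of_forall_isNilpotent fun x hx =>
    ⟨n, by simpa [hn] using Submodule.pow_mem_pow I hx n⟩

theorem IsSemiprimaryRing.of_isNilpotent_of_isSemisimpleRing_quotient (N : Ideal R) [N.IsTwoSided]
    (hN : IsNilpotent N) [IsSemisimpleRing (R ⧸ N)] : IsSemiprimaryRing R := by
  obtain rfl : Ring.jacobson R = N :=
    (Ring.jacobson_le_of_eq_bot (IsSemisimpleRing.jacobson_eq_bot _)).antisymm
      (le_jacobson_of_isNilpotent hN)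
  exact ⟨inferInstance, hN⟩

theorem eq_zero_of_isNilpotent_of_forall_mul_eq_zero {a r : R} (hnil : IsNilpotent (r * a))
    (h : ∀ s, s * (a * r * a) = 0 → s * a = 0) : a = 0 := by
  obtain ⟨m, hm⟩ := hnil
  suffices ∀ k, (a * r) ^ k * a = 0 → a = 0 from this m (by rw [mul_pow_mul, hm, mul_zero])
  intro k
  induction k with
  | zero => simp
  | succ k ih => exact fun hk => ih (h _ (by rwa [← mul_assoc, ← pow_succ]))

theorem IsSemiprimeRing.eq_bot_of_forall_isNilpotent [IsNoetherianRing R] (hR : IsSemiprimeRing R)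
    {I : Ideal R} (hI : ∀ x ∈ I, IsNilpotent x) : I = ⊥ := by
  by_contra hne
  obtain ⟨a₀, ha₀I, ha₀⟩ := Submodule.exists_mem_ne_zero_of_ne_bot hne
  obtain ⟨_, ⟨a, haI, ha, rfl⟩, hmax⟩ := exists_maximal_of_wellFoundedGT
    (fun L : Ideal R => ∃ a ∈ I, a ≠ 0 ∧ L = ker (toSpanSingleton R R a)) ⟨_, a₀, ha₀I, ha₀, rfl⟩
  refine ha (hR a fun r => by_contra fun hara => ha ?_)
  have hle : ker (toSpanSingleton R R (a * r * a)) ≤ ker (toSpanSingleton R R a) :=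
    hmax ⟨_, I.mul_mem_left _ haI, hara, rfl⟩ fun s hs => by
      simp_all [← mul_assoc]
  refine eq_zero_of_isNilpotent_of_forall_mul_eq_zero (hI _ (I.mul_mem_left r haI)) fun s hs => ?_
  simpa using hle (show s ∈ ker (toSpanSingleton R R (a * r * a)) by simpa using hs)

theorem IsSemiprimeRing.exists_isIdempotentElem_mem [IsNoetherianRing R] (hR : IsSemiprimeRing R)
    (hreg : HasRegularPowers R) {I : Ideal R} (hI : I ≠ ⊥) :
    ∃ e ∈ I, IsIdempotentElem e ∧ e ≠ 0 := by
  obtain ⟨a, haI, ha⟩ : ∃ a ∈ I, ¬ IsNilpotent a := by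
    by_contra! h
    exact hI (hR.eq_bot_of_forall_isNilpotent h)
  obtain ⟨n, hn, b, hb⟩ := hreg a
  refine ⟨b * a ^ n, I.mul_mem_left _ (I.pow_mem_of_mem haI n (Nat.pos_of_ne_zero hn)), ?_, ?_⟩
  · rw [IsIdempotentElem, mul_assoc, ← mul_assoc (a ^ n), ← hb]
  · intro h
    exact ha ⟨n, by rw [hb, mul_assoc, h, mul_zero]⟩

theorem IsIdempotentElem.span_singleton_lt {e f : R} (he : IsIdempotentElem e)
    (hf : IsIdempotentElem f) (hfe : f * e = 0) (hf0 : f ≠ 0) :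
    IsIdempotentElem (e + (1 - e) * f) ∧ span {e} < span {e + (1 - e) * f} := by
  have hf' : IsIdempotentElem ((1 - e) * f) := by
    rw [IsIdempotentElem, mul_assoc, ← mul_assoc f, mul_sub, mul_one, hfe, sub_zero, hf.eq]
  have hef' : e * ((1 - e) * f) = 0 := by rw [← mul_assoc, he.mul_one_sub_self, zero_mul]
  have hf'e : (1 - e) * f * e = 0 := by rw [mul_assoc, hfe, mul_zero]
  refine ⟨he.add hf' (by rw [hef', hf'e, add_zero]), SetLike.lt_iff_le_and_exists.2 ⟨?_, f, ?_, ?_⟩⟩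
  · rw [span_singleton_le_iff_mem, mem_span_singleton']
    exact ⟨e, by rw [mul_add, hef', add_zero, he.eq]⟩
  · rw [mem_span_singleton']
    exact ⟨f, by rw [mul_add, hfe, zero_add, ← mul_assoc, mul_sub, mul_one, hfe, sub_zero, hf.eq]⟩
  · rw [mem_span_singleton']
    rintro ⟨s, rfl⟩
    exact hf0 (by rw [← hfe, mul_assoc, he.eq])

theorem IsSemiprimeRing.exists_isIdempotentElem_eq_span [IsNoetherianRing R]
    (hR : IsSemiprimeRing R) (hreg : HasRegularPowers R) (I : Ideal R) :
    ∃ e, IsIdempotentElem e ∧ I = span {e} := by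
  obtain ⟨_, ⟨e, heI, he, rfl⟩, hmax⟩ := exists_maximal_of_wellFoundedGT
    (fun J : Ideal R => ∃ e ∈ I, IsIdempotentElem e ∧ J = span {e}) ⟨_, 0, I.zero_mem, .zero, rfl⟩
  refine ⟨e, he, le_antisymm (fun x hx => ?_) (span_le.2 (by simpa using heI))⟩
  have hK : I ⊓ ker (toSpanSingleton R R e) = ⊥ := by
    by_contra hne
    obtain ⟨f, ⟨hfI, hfe⟩, hf, hf0⟩ := hR.exists_isIdempotentElem_mem hreg hne
    obtain ⟨hg, hlt⟩ := he.span_singleton_lt hf (by simpa using hfe) hf0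
    exact hlt.not_ge (hmax ⟨_, add_mem heI (I.mul_mem_left _ hfI), hg, rfl⟩ hlt.le)
  have hx' : x - x * e ∈ I ⊓ ker (toSpanSingleton R R e) :=
    ⟨sub_mem hx (I.mul_mem_left _ heI), by simp [sub_mul, mul_assoc, he.eq]⟩
  rw [hK, Submodule.mem_bot, sub_eq_zero] at hx'
  exact mem_span_singleton'.2 ⟨x, hx'.symm⟩

theorem IsSemiprimeRing.isSemisimpleRing [IsNoetherianRing R] (hR : IsSemiprimeRing R)
    (hreg : HasRegularPowers R) : IsSemisimpleRing R := by
  refine (isSemisimpleModule_iff R R).2 ⟨fun I => ?_⟩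
  obtain ⟨e, he, rfl⟩ := hR.exists_isIdempotentElem_eq_span hreg I
  have hproj : IsIdempotentElem (toSpanSingleton R R e) :=
    LinearMap.ext fun x => by simp [mul_assoc, he.eq]
  rw [← submodule_span_eq, LinearMap.span_singleton_eq_range]
  exact ⟨_, hproj.isCompl⟩

theorem Ideal.isNilpotent_mul_top_of_mul_self_le {N K : Ideal R} [N.IsTwoSided]
    (hN : IsNilpotent N) (hK : K * K ≤ N) : IsNilpotent (K * ⊤) := by
  obtain ⟨n, hn⟩ := hN
  have hsq : K * ⊤ * (K * ⊤) ≤ N :=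
    calc K * ⊤ * (K * ⊤) = K * (⊤ * K) * ⊤ := by simp only [mul_assoc]
      _ ≤ K * K * ⊤ := mul_mono_left (mul_mono_right mul_le_right)
      _ ≤ N * ⊤ := mul_mono_left hK
      _ = N := mul_top N
  have hpow : ∀ k, (K * ⊤) ^ (2 * k) ≤ N ^ k := by
    intro k
    induction k with
    | zero => exact le_rfl
    | succ k ih =>
      rw [Nat.mul_succ, IsTwoSided.pow_add, Submodule.pow_succ (n := k)]
      exact mul_mono ih (by rwa [Submodule.pow_succ, Submodule.pow_one])
  exact ⟨2 * n, le_bot_iff.1 ((hpow n).trans hn.le)⟩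

theorem mem_of_maximal_isNilpotent {N : Ideal R}
    (hN : Maximal (fun I : Ideal R => I.IsTwoSided ∧ IsNilpotent I) N) {a : R}
    (ha : ∀ r, a * r * a ∈ N) : a ∈ N := by
  have := hN.1.1
  have hKK : (N ⊔ span {a}) * (N ⊔ span {a}) ≤ N := by
    rw [Submodule.sup_mul, Submodule.mul_sup, Submodule.mul_sup]
    refine sup_le (sup_le mul_le_left mul_le_left) (sup_le mul_le_right (Submodule.mul_le.2 ?_))
    rintro _ hs _ ht
    obtain ⟨s, rfl⟩ := mem_span_singleton'.1 hs
    obtain ⟨t, rfl⟩ := mem_span_singleton'.1 ht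
    simpa only [mul_assoc] using N.mul_mem_left s (ha t)
  have hle : N ⊔ span {a} ≤ (N ⊔ span {a}) * ⊤ := fun x hx => by
    simpa using Submodule.mul_mem_mul hx (Submodule.mem_top (x := 1))
  exact hN.2 ⟨inferInstance, isNilpotent_mul_top_of_mul_self_le hN.1.2 hKK⟩
    (le_sup_left.trans hle) (hle (Submodule.mem_sup_right (mem_span_singleton_self a)))

theorem isSemiprimeRing_quotient_of_maximal_isNilpotent {N : Ideal R} [N.IsTwoSided]
    (hN : Maximal (fun I : Ideal R => I.IsTwoSided ∧ IsNilpotent I) N) :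
    IsSemiprimeRing (R ⧸ N) := by
  intro a ha
  obtain ⟨a, rfl⟩ := Ideal.Quotient.mk_surjective a
  rw [Ideal.Quotient.eq_zero_iff_mem]
  refine mem_of_maximal_isNilpotent hN fun r => ?_
  rw [← Ideal.Quotient.eq_zero_iff_mem, map_mul, map_mul]
  exact ha _

theorem IsNoetherianRing.isArtinianRing_of_hasRegularPowers [IsNoetherianRing R]
    (hreg : HasRegularPowers R) : IsArtinianRing R := by
  obtain ⟨N, hN⟩ := exists_maximal_of_wellFoundedGT
    (fun I : Ideal R => I.IsTwoSided ∧ IsNilpotent I) ⟨⊥, inferInstance, 1, Submodule.pow_one _⟩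
  have := hN.1.1
  have : IsNoetherianRing (R ⧸ N) :=
    isNoetherianRing_of_surjective R _ (Ideal.Quotient.mk N) Ideal.Quotient.mk_surjective
  have : IsSemisimpleRing (R ⧸ N) :=
    (isSemiprimeRing_quotient_of_maximal_isNilpotent hN).isSemisimpleRing
      (hreg.of_surjective _ Ideal.Quotient.mk_surjective)
  have := IsSemiprimaryRing.of_isNilpotent_of_isSemisimpleRing_quotient N hN.1.2
  exact IsSemiprimaryRing.isNoetherian_iff_isArtinian.mp ‹_›

end

/-- A right noetherian π-regular ring is right artinian. (Right noetherian /
right artinian are expressed as left noetherian / left artinian over `Rᵐᵒᵖ`.) -/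
theorem rightArtinian_of_rightNoetherian_piRegular
    {R : Type u} [Ring R] (hnoeth : IsNoetherianRing Rᵐᵒᵖ)
    (hπ : ∀ a : R, IsPiRegularElem a) :
    IsArtinianRing Rᵐᵒᵖ :=
  have := hnoeth
  IsNoetherianRing.isArtinianRing_of_hasRegularPowers
    (HasRegularPowers.mulOpposite fun a => (hπ a).exists_pow_eq_pow_mul_mul_pow)
end
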